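/- arXiv:2604.25372 — 5 statements merged into one kernel-verified Lean document; each statement's English description precedes it below -/
import Mathlib

section
/- Let φ : [0,∞) → [0,∞) be continuous, strictly increasing, with φ(0) = 0, and such that Id − φ is a class-K function (where Id(s) = s). Then there exists a class-KL function β̂ such that every non-negative real sequence (v_k)_{k≥0} satisfying v_{k+1} ≤ φ(v_k) for all k ≥ 0 obeys v_k ≤ β̂(v₀, k) for all k ≥ 0. -/
/-!
Take `β̂ (s, t) = φ^[⌊t⌋₊] s`. Since `φ` is monotone, induction gives `v k ≤ φ^[k] (v 0)`.
Because `Id - φ` is of class K, `φ s < s` for `s > 0`, so the iterates `φ^[n] s` decrease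
to a limit which, by continuity of `φ`, is a fixed point of `φ`, hence `0`.
-/

/-- A function `γ : [0,∞) → [0,∞)` is of class K if it is continuous, strictly
increasing, and `γ 0 = 0` (modelled on `ℝ` with all conditions on `Set.Ici 0`). -/
def ClassK (γ : ℝ → ℝ) : Prop :=
  ContinuousOn γ (Set.Ici 0) ∧ StrictMonoOn γ (Set.Ici 0) ∧ γ 0 = 0

/-- Class K∞: class K and tends to infinity at infinity. -/
def ClassKInf (γ : ℝ → ℝ) : Prop :=
  ClassK γ ∧ Filter.Tendsto γ Filter.atTop Filter.atTop

/-- Class KL: `s ↦ β s t` is of class K for each `t ≥ 0`, and for each `s ≥ 0`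
the map `t ↦ β s t` is decreasing on `[0,∞)` and tends to `0` at infinity. -/
def ClassKL (β : ℝ → ℝ → ℝ) : Prop :=
  (∀ t ≥ (0 : ℝ), ClassK fun s => β s t) ∧
  ∀ s ≥ (0 : ℝ), AntitoneOn (fun t => β s t) (Set.Ici 0) ∧
    Filter.Tendsto (fun t => β s t) Filter.atTop (nhds 0)

open Set Filter Function Topology

theorem MonotoneOn.mapsTo_Ici_of_map_eq {α : Type*} [Preorder α] {f : α → α} {a : α}
    (hf : MonotoneOn f (Ici a)) (hfa : f a = a) : MapsTo f (Ici a) (Ici a) :=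
  fun _ hx => hfa ▸ hf self_mem_Ici hx hx

theorem StrictMonoOn.iterate {α : Type*} [Preorder α] {f : α → α} {s : Set α}
    (hf : StrictMonoOn f s) (hmaps : MapsTo f s s) : ∀ n, StrictMonoOn f^[n] s
  | 0 => strictMonoOn_id
  | n + 1 => (hf.iterate hmaps n).comp hf hmaps

theorem MonotoneOn.seq_le_iterate {α : Type*} [Preorder α] {f : α → α} {s : Set α}
    (hf : MonotoneOn f s) (hmaps : MapsTo f s s) {v : ℕ → α} (hv : ∀ k, v k ∈ s)
    (hstep : ∀ k, v (k + 1) ≤ f (v k)) : ∀ k, v k ≤ f^[k] (v 0)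
  | 0 => le_rfl
  | k + 1 => calc
      v (k + 1) ≤ f (v k) := hstep k
      _ ≤ f (f^[k] (v 0)) :=
        hf (hv k) (hmaps.iterate k (hv 0)) (hf.seq_le_iterate hmaps hv hstep k)
      _ = f^[k + 1] (v 0) := (iterate_succ_apply' f k (v 0)).symm

theorem isFixedPt_of_tendsto_iterate_of_mapsTo {α : Type*} [TopologicalSpace α] [T2Space α]
    {f : α → α} {s : Set α} {x y : α} (hy : Tendsto (fun n => f^[n] x) atTop (𝓝 y))
    (hx : x ∈ s) (hmaps : MapsTo f s s) (hf : ContinuousWithinAt f s y) : IsFixedPt f y := by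
  have hy' : Tendsto (fun n => f^[n] x) atTop (𝓝[s] y) :=
    tendsto_nhdsWithin_iff.2 ⟨hy, Eventually.of_forall fun n => hmaps.iterate n hx⟩
  refine tendsto_nhds_unique ((tendsto_add_atTop_iff_nat 1).1 ?_) hy
  simp only [iterate_succ' f]
  exact hf.tendsto.comp hy'

theorem map_le_self_of_map_lt_self {α : Type*} [PartialOrder α] {f : α → α} {a y : α}
    (hfa : f a = a) (hlt : ∀ y, a < y → f y < y) (hy : a ≤ y) : f y ≤ y := by
  rcases hy.eq_or_lt with rfl | hy
  exacts [hfa.le, (hlt y hy).le]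

theorem Set.MapsTo.antitone_iterate_of_map_le {α : Type*} [Preorder α] {f : α → α}
    {s : Set α} (hmaps : MapsTo f s s) (hle : ∀ y ∈ s, f y ≤ y) {x : α} (hx : x ∈ s) :
    Antitone fun n => f^[n] x :=
  antitone_nat_of_succ_le fun n => by
    rw [iterate_succ_apply']
    exact hle _ (hmaps.iterate n hx)

theorem tendsto_iterate_of_map_lt_self {α : Type*} [ConditionallyCompleteLinearOrder α]
    [TopologicalSpace α] [OrderTopology α] {f : α → α} {a x : α}
    (hcont : ContinuousOn f (Ici a)) (hmaps : MapsTo f (Ici a) (Ici a)) (hfa : f a = a)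
    (hlt : ∀ y, a < y → f y < y) (hx : a ≤ x) :
    Tendsto (fun n => f^[n] x) atTop (𝓝 a) := by
  have hmem (n : ℕ) : f^[n] x ∈ Ici a := hmaps.iterate n hx
  have hanti := hmaps.antitone_iterate_of_map_le (fun _ => map_le_self_of_map_lt_self hfa hlt) hx
  have hlim := tendsto_atTop_ciInf hanti ⟨a, forall_mem_range.2 hmem⟩
  have haL : a ≤ ⨅ n, f^[n] x := le_ciInf hmem
  have hfix : IsFixedPt f (⨅ n, f^[n] x) :=
    isFixedPt_of_tendsto_iterate_of_mapsTo hlim hx hmaps (hcont _ haL)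
  obtain hL | hL := haL.eq_or_lt
  · rwa [← hL] at hlim
  · exact absurd hfix (hlt _ hL).ne

theorem classKL_iterate_floor {φ : ℝ → ℝ} (hcont : ContinuousOn φ (Ici 0))
    (hmono : StrictMonoOn φ (Ici 0)) (h0 : φ 0 = 0) (hlt : ∀ s, 0 < s → φ s < s) :
    ClassKL fun s t => φ^[⌊t⌋₊] s := by
  have hmaps := hmono.monotoneOn.mapsTo_Ici_of_map_eq h0
  refine ⟨fun t _ => ⟨hcont.iterate hmaps _, hmono.iterate hmaps _, iterate_fixed h0 _⟩,
    fun s hs => ⟨fun t₁ _ t₂ _ ht => ?_, ?_⟩⟩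
  · exact hmaps.antitone_iterate_of_map_le (fun _ => map_le_self_of_map_lt_self h0 hlt) hs
      (Nat.floor_le_floor ht)
  · exact (tendsto_iterate_of_map_lt_self hcont hmaps h0 hlt hs).comp tendsto_nat_floor_atTop

theorem stmt_1_general (φ : ℝ → ℝ)
    (hcont : ContinuousOn φ (Set.Ici 0)) (hmono : StrictMonoOn φ (Set.Ici 0))
    (h0 : φ 0 = 0)
    (hIdSub : ClassK fun s => s - φ s) :
    ∃ βhat : ℝ → ℝ → ℝ, ClassKL βhat ∧
      ∀ v : ℕ → ℝ, (∀ k, 0 ≤ v k) → (∀ k, v (k + 1) ≤ φ (v k)) →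
        ∀ k : ℕ, v k ≤ βhat (v 0) k := by
  have hlt (s : ℝ) (hs : 0 < s) : φ s < s := by
    simpa [h0] using hIdSub.2.1 self_mem_Ici hs.le hs
  refine ⟨_, classKL_iterate_floor hcont hmono h0 hlt, fun v hv hstep k => ?_⟩
  simpa using hmono.monotoneOn.seq_le_iterate
    (hmono.monotoneOn.mapsTo_Ici_of_map_eq h0) hv hstep k

/-- Lemma 1(i) of the paper: comparison lemma, unperturbed case. -/
theorem stmt_1 (φ : ℝ → ℝ)
    (hcont : ContinuousOn φ (Set.Ici 0)) (hmono : StrictMonoOn φ (Set.Ici 0))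
    (h0 : φ 0 = 0) (hnonneg : ∀ s ≥ (0 : ℝ), 0 ≤ φ s)
    (hIdSub : ClassK fun s => s - φ s) :
    ∃ βhat : ℝ → ℝ → ℝ, ClassKL βhat ∧
      ∀ v : ℕ → ℝ, (∀ k, 0 ≤ v k) → (∀ k, v (k + 1) ≤ φ (v k)) →
        ∀ k : ℕ, v k ≤ βhat (v 0) k :=
  stmt_1_general φ hcont hmono h0 hIdSub
end

section
/- Let φ : [0,∞) → [0,∞) be continuous, strictly increasing, with φ(0) = 0, and such that Id − φ is a class-K function, and let b = lim_{r→∞} (r − φ(r)) ∈ (0,∞]. Then for every ε > 0 there exists d̄(ε) > 0 such that: for every constant d with 0 ≤ d ≤ d̄(ε) and d ≤ b, every non-negative real sequence (v_k)_{k≥0} satisfying v_{k+1} ≤ φ(v_k) + d for all k ≥ 0 obeys limsup_{k→∞} v_k ≤ ε. -/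
/-!
Take `d̄ = (ε - φ ε) / 2`, positive because `Id - φ` is strictly increasing and vanishes at `0`.
While `v k > ε`, monotonicity of `Id - φ` gives `v (k+1) ≤ v k - (ε - φ ε) + d ≤ v k - d̄`, so the
sequence drops below `ε` after finitely many steps; once `v k ≤ ε`, monotonicity of `φ` gives
`v (k+1) ≤ φ ε + d ≤ ε`, so it stays there.
-/

open Filter Set

theorem eventually_le_of_descent_of_invariant {v : ℕ → ℝ} {ε δ : ℝ} (hδ : 0 < δ)
    (hdesc : ∀ k, ε < v k → v (k + 1) + δ ≤ v k) (hinv : ∀ k, v k ≤ ε → v (k + 1) ≤ ε) :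
    ∀ᶠ k in atTop, v k ≤ ε := by
  obtain ⟨N, hN⟩ : ∃ N, v N ≤ ε := by
    by_contra! habove
    have hdrop : ∀ k : ℕ, v k + k * δ ≤ v 0 := by
      intro k
      induction k with
      | zero => simp
      | succ k ih =>
        have := hdesc k (habove k)
        push_cast
        linarith
    obtain ⟨n, hn⟩ := exists_nat_gt ((v 0 - ε) / δ)
    rw [div_lt_iff₀ hδ] at hn
    linarith [hdrop n, habove n]
  exact eventually_atTop.2 ⟨N, fun k hk => Nat.le_induction hN (fun k _ => hinv k) k hk⟩

section Comparison

variable {φ : ℝ → ℝ} {ε d x : ℝ}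

theorem add_le_of_le_of_monotoneOn (hφ : MonotoneOn φ (Ici 0)) (hd : d ≤ ε - φ ε)
    (hx : 0 ≤ x) (hxε : x ≤ ε) : φ x + d ≤ ε := by
  have := hφ hx (hx.trans hxε) hxε
  linarith

theorem add_sub_le_of_monotoneOn_id_sub (hψ : MonotoneOn (fun s => s - φ s) (Ici 0))
    (hε : 0 ≤ ε) (hx : ε ≤ x) : φ x + (ε - φ ε) ≤ x := by
  have : ε - φ ε ≤ x - φ x := hψ hε (hε.trans hx) hx
  linarith

end Comparison

theorem stmt_2_general (φ : ℝ → ℝ)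
    (hmono : StrictMonoOn φ (Set.Ici 0))
    (hIdSub : ClassK fun s => s - φ s)
    (b : EReal) :
    ∀ ε : ℝ, 0 < ε → ∃ dbar : ℝ, 0 < dbar ∧
      ∀ d : ℝ, 0 ≤ d → d ≤ dbar → (d : EReal) ≤ b →
        ∀ v : ℕ → ℝ, (∀ k, 0 ≤ v k) → (∀ k, v (k + 1) ≤ φ (v k) + d) →
          Filter.limsup v Filter.atTop ≤ ε := by
  obtain ⟨-, hψ, hψ0⟩ := hIdSub
  intro ε hε
  have hgap : 0 < ε - φ ε := hψ0 ▸ hψ self_mem_Ici hε.le hε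
  refine ⟨(ε - φ ε) / 2, half_pos hgap, fun d _ hd _ v hv hstep => ?_⟩
  have hev : ∀ᶠ k in atTop, v k ≤ ε := by
    refine eventually_le_of_descent_of_invariant (half_pos hgap) (fun k hk => ?_) (fun k hk => ?_)
    · linarith [hstep k, add_sub_le_of_monotoneOn_id_sub hψ.monotoneOn hε.le hk.le]
    · exact (hstep k).trans (add_le_of_le_of_monotoneOn hmono.monotoneOn (by linarith) (hv k) hk)
  exact limsup_le_of_le (isCoboundedUnder_le_of_le atTop hv) hev

/-- Lemma 1(ii) of the paper: comparison lemma, ultimate bound. -/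
theorem stmt_2 (φ : ℝ → ℝ)
    (hcont : ContinuousOn φ (Set.Ici 0)) (hmono : StrictMonoOn φ (Set.Ici 0))
    (h0 : φ 0 = 0) (hnonneg : ∀ s ≥ (0 : ℝ), 0 ≤ φ s)
    (hIdSub : ClassK fun s => s - φ s)
    (b : EReal) (hbpos : (0 : EReal) < b)
    (hb : Filter.Tendsto (fun r : ℝ => ((r - φ r : ℝ) : EReal)) Filter.atTop (nhds b)) :
    ∀ ε : ℝ, 0 < ε → ∃ dbar : ℝ, 0 < dbar ∧
      ∀ d : ℝ, 0 ≤ d → d ≤ dbar → (d : EReal) ≤ b →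
        ∀ v : ℕ → ℝ, (∀ k, 0 ≤ v k) → (∀ k, v (k + 1) ≤ φ (v k) + d) →
          Filter.limsup v Filter.atTop ≤ ε :=
  stmt_2_general φ hmono hIdSub b
end

section
/- Let f : ℝⁿ → ℝ be differentiable and β-strongly convex with β > 0, let μ > 0, and let γₙ denote the standard Gaussian measure on ℝⁿ (the n-fold product of the standard Gaussian measure N(0,1) on ℝ). Assume that for every x ∈ ℝⁿ the functions u ↦ f(x + μu) and u ↦ ∇f(x + μu) are integrable with respect to γₙ, and define the Gaussian smoothing f_μ(x) = ∫ f(x + μu) dγₙ(u). Then f_μ is β-strongly convex: for all x, y ∈ ℝⁿ, f_μ(y) ≥ f_μ(x) + ⟨∫ ∇f(x + μu) dγₙ(u), y − x⟩ + (β/2)‖y − x‖². -/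
/-!
Strong convexity at the pair `(x + μu, y + μu)` gives, for every `u`,
`f(y + μu) ≥ f(x + μu) + ⟪∇f(x + μu), y - x⟫ + β/2 ‖y - x‖²`, since the increment is `y - x`
whatever `u` is. Integrating against the probability measure `γₙ` preserves the inequality,
and the inner product with the fixed vector `y - x` commutes with the integral.
-/

open MeasureTheory ProbabilityTheory
open scoped RealInnerProductSpace

/-- The standard Gaussian measure on `ℝⁿ`, the `n`-fold product of `N(0,1)`. -/
noncomputable def stdGaussian (n : ℕ) : Measure (EuclideanSpace ℝ (Fin n)) :=
  Measure.map (MeasurableEquiv.toLp 2 (Fin n → ℝ))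
    (Measure.pi fun _ : Fin n => gaussianReal 0 1)

theorem integral_add_inner_integral_add_le_integral {Ω E : Type*} [MeasurableSpace Ω]
    [NormedAddCommGroup E] [InnerProductSpace ℝ E] [CompleteSpace E]
    {ν : Measure Ω} [IsProbabilityMeasure ν] {g h : Ω → ℝ} {G : Ω → E} (v : E) (c : ℝ)
    (hg : Integrable g ν) (hh : Integrable h ν) (hG : Integrable G ν)
    (hle : ∀ᵐ ω ∂ν, g ω + ⟪G ω, v⟫ + c ≤ h ω) :
    ∫ ω, g ω ∂ν + ⟪∫ ω, G ω ∂ν, v⟫ + c ≤ ∫ ω, h ω ∂ν := by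
  have hGv : Integrable (fun ω => ⟪G ω, v⟫) ν := hG.inner_const v
  have hinner : ∫ ω, ⟪G ω, v⟫ ∂ν = ⟪∫ ω, G ω ∂ν, v⟫ := by
    simpa only [← real_inner_comm v] using integral_inner (𝕜 := ℝ) hG v
  have hgGv : Integrable (fun ω => g ω + ⟪G ω, v⟫) ν := hg.add hGv
  calc ∫ ω, g ω ∂ν + ⟪∫ ω, G ω ∂ν, v⟫ + c
      = ∫ ω, (g ω + ⟪G ω, v⟫ + c) ∂ν := by
        rw [integral_add hgGv (integrable_const c), integral_add hg hGv, hinner,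
          integral_const, probReal_univ, one_smul]
    _ ≤ ∫ ω, h ω ∂ν := integral_mono_ae (hgGv.add (integrable_const c)) hh hle

instance isProbabilityMeasure_stdGaussian (n : ℕ) : IsProbabilityMeasure (stdGaussian n) :=
  Measure.isProbabilityMeasure_map (MeasurableEquiv.measurable _).aemeasurable

theorem stmt_5_general {n : ℕ} (f : EuclideanSpace ℝ (Fin n) → ℝ) (β μ : ℝ)
    (hsc : ∀ x y, f y ≥ f x + ⟪gradient f x, y - x⟫ + β / 2 * ‖y - x‖ ^ 2)
    (hint : ∀ x, Integrable (fun u => f (x + μ • u)) (stdGaussian n))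
    (hint' : ∀ x, Integrable (fun u => gradient f (x + μ • u)) (stdGaussian n)) :
    ∀ x y, (∫ u, f (y + μ • u) ∂(stdGaussian n)) ≥
      (∫ u, f (x + μ • u) ∂(stdGaussian n)) +
      ⟪∫ u, gradient f (x + μ • u) ∂(stdGaussian n), y - x⟫ +
      β / 2 * ‖y - x‖ ^ 2 := by
  intro x y
  refine integral_add_inner_integral_add_le_integral (y - x) _ (hint x) (hint y) (hint' x)
    (ae_of_all _ fun u => ?_)
  simpa only [add_sub_add_right_eq_sub] using hsc (x + μ • u) (y + μ • u)

/-- Gaussian smoothing preserves strong convexity (Lemma 5 of the paper). -/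
theorem stmt_5 {n : ℕ} (f : EuclideanSpace ℝ (Fin n) → ℝ) (β μ : ℝ)
    (hβ : 0 < β) (hμ : 0 < μ) (hdiff : Differentiable ℝ f)
    (hsc : ∀ x y, f y ≥ f x + ⟪gradient f x, y - x⟫ + β / 2 * ‖y - x‖ ^ 2)
    (hint : ∀ x, Integrable (fun u => f (x + μ • u)) (stdGaussian n))
    (hint' : ∀ x, Integrable (fun u => gradient f (x + μ • u)) (stdGaussian n)) :
    ∀ x y, (∫ u, f (y + μ • u) ∂(stdGaussian n)) ≥
      (∫ u, f (x + μ • u) ∂(stdGaussian n)) +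
      ⟪∫ u, gradient f (x + μ • u) ∂(stdGaussian n), y - x⟫ +
      β / 2 * ‖y - x‖ ^ 2 :=
  stmt_5_general f β μ hsc hint hint'
end

section
/- Let f : ℝⁿ → ℝ be differentiable, β-strongly convex with β > 0, with L₁-Lipschitz gradient (L₁ > 0), and let z* be its (unique) minimiser. Let h satisfy 0 < h ≤ 2/(β + L₁) and set c = 2hβL₁/(β + L₁) ∈ (0,1]. Then for every sequence (q_k)_{k∈ℕ} in ℝⁿ and every z₀ ∈ ℝⁿ, the perturbed gradient descent iterates z_{k+1} = z_k − h∇f(z_k) + q_k satisfy, for all k ≥ 1, ‖z_k − z*‖ ≤ (1 − c)^{k/2}·‖z₀ − z*‖ + (1/(1 − √(1−c)))·sup_{0≤j≤k−1} ‖q_j‖ (where when c = 1 the second term is interpreted as sup_{0≤j≤k−1} ‖q_j‖). -/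
/-!
The gradient of a β-strongly convex function with L-Lipschitz gradient satisfies the strong
cocoercivity inequality `β L ‖x - y‖² + ‖∇f x - ∇f y‖² ≤ (β + L) ⟪∇f x - ∇f y, x - y⟫`,
obtained by applying the Baillon–Haddad argument to the convex, `(L - β)`-smooth function
`f - β/2 ‖·‖²`. Taking `y = z*`, where the gradient vanishes, it makes the gradient step
`x ↦ x - h ∇f x` a contraction towards `z*` with factor `√(1 - c)` as soon as `h ≤ 2/(β + L)`.
The errors `eₖ = ‖zₖ - z*‖` then obey `eₖ₊₁ ≤ √(1 - c) eₖ + ‖qₖ‖`; unrolling this recursion and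
summing the geometric series gives the bound.
-/

open scoped RealInnerProductSpace

open Finset

section Recurrence

variable {a b : ℕ → ℝ} {r B : ℝ}

theorem le_pow_mul_add_geom_sum_mul_of_le_mul_add (hr : 0 ≤ r)
    (hrec : ∀ k, a (k + 1) ≤ r * a k + b k) {k : ℕ} (hb : ∀ j < k, b j ≤ B) :
    a k ≤ r ^ k * a 0 + (∑ i ∈ range k, r ^ i) * B := by
  induction k with
  | zero => simp
  | succ k ih =>
    have ih := ih fun j hj => hb j (by omega)
    calc a (k + 1) ≤ r * a k + b k := hrec k
      _ ≤ r * (r ^ k * a 0 + (∑ i ∈ range k, r ^ i) * B) + B :=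
        add_le_add (mul_le_mul_of_nonneg_left ih hr) (hb k (by omega))
      _ = r ^ (k + 1) * a 0 + (∑ i ∈ range (k + 1), r ^ i) * B := by
        rw [geom_sum_succ]; ring

theorem le_pow_mul_add_div_of_le_mul_add (hr0 : 0 ≤ r) (hr1 : r < 1) (hB : 0 ≤ B)
    (hrec : ∀ k, a (k + 1) ≤ r * a k + b k) {k : ℕ} (hb : ∀ j < k, b j ≤ B) :
    a k ≤ r ^ k * a 0 + 1 / (1 - r) * B := by
  have hgeom : ∑ i ∈ range k, r ^ i ≤ 1 / (1 - r) := by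
    simpa only [← range_eq_Ico, pow_zero] using geom_sum_Ico_le_of_lt_one (m := 0) (n := k) hr0 hr1
  calc a k ≤ r ^ k * a 0 + (∑ i ∈ range k, r ^ i) * B :=
        le_pow_mul_add_geom_sum_mul_of_le_mul_add hr0 hrec hb
    _ ≤ r ^ k * a 0 + 1 / (1 - r) * B := by gcongr

end Recurrence

variable {E : Type*} [NormedAddCommGroup E] [InnerProductSpace ℝ E]

theorem norm_sq_eq_norm_sq_add_two_mul_inner_add_norm_sq (u v : E) :
    ‖v‖ ^ 2 = ‖u‖ ^ 2 + 2 * ⟪u, v - u⟫ + ‖v - u‖ ^ 2 := by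
  simpa using norm_add_sq_real u (v - u)

theorem mul_norm_sq_le_inner_of_quadratic_lower_bound {f : E → ℝ} {g : E → E} {β : ℝ}
    (hsc : ∀ x y, f y ≥ f x + ⟪g x, y - x⟫ + β / 2 * ‖y - x‖ ^ 2) (x y : E) :
    β * ‖x - y‖ ^ 2 ≤ ⟪g x - g y, x - y⟫ := by
  have hxy := hsc x y
  have hyx := hsc y x
  rw [← neg_sub x y, inner_neg_right, norm_neg] at hxy
  rw [inner_sub_left]
  linarith

theorem add_inner_add_norm_sq_div_le_of_quadratic_bounds {φ : E → ℝ} {G : E → E} {M : ℝ}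
    (hM : 0 < M) (hlow : ∀ u v, φ u + ⟪G u, v - u⟫ ≤ φ v)
    (hup : ∀ u v, φ v ≤ φ u + ⟪G u, v - u⟫ + M / 2 * ‖v - u‖ ^ 2) (u v : E) :
    φ u + ⟪G u, v - u⟫ + ‖G v - G u‖ ^ 2 / (2 * M) ≤ φ v := by
  set w := G v - G u
  have hlow' := hlow u (v - M⁻¹ • w)
  have hup' := hup v (v - M⁻¹ • w)
  rw [sub_sub_cancel_left, inner_neg_right, norm_neg, norm_smul, real_inner_smul_right,
    Real.norm_of_nonneg (inv_nonneg.2 hM.le)] at hup'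
  rw [sub_right_comm, inner_sub_right, real_inner_smul_right] at hlow'
  have hw : M⁻¹ * ⟪G v, w⟫ - M⁻¹ * ⟪G u, w⟫ = M⁻¹ * ‖w‖ ^ 2 := by
    rw [← mul_sub, ← inner_sub_left, real_inner_self_eq_norm_sq]
  have hM' : M / 2 * (M⁻¹ * ‖w‖) ^ 2 = M⁻¹ * ‖w‖ ^ 2 - ‖w‖ ^ 2 / (2 * M) := by
    field_simp; ring
  linarith

theorem cocoercive_of_quadratic_bounds {φ : E → ℝ} {G : E → E} {M : ℝ}
    (hM : 0 < M) (hlow : ∀ u v, φ u + ⟪G u, v - u⟫ ≤ φ v)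
    (hup : ∀ u v, φ v ≤ φ u + ⟪G u, v - u⟫ + M / 2 * ‖v - u‖ ^ 2) (x y : E) :
    ‖G x - G y‖ ^ 2 ≤ M * ⟪G x - G y, x - y⟫ := by
  have hxy := add_inner_add_norm_sq_div_le_of_quadratic_bounds hM hlow hup x y
  have hyx := add_inner_add_norm_sq_div_le_of_quadratic_bounds hM hlow hup y x
  rw [← neg_sub x y, inner_neg_right, norm_sub_rev] at hxy
  have key : ‖G x - G y‖ ^ 2 / M ≤ ⟪G x - G y, x - y⟫ := by
    have halves : ‖G x - G y‖ ^ 2 / M = 2 * (‖G x - G y‖ ^ 2 / (2 * M)) := by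
      field_simp
    rw [inner_sub_left]; linarith
  rwa [div_le_iff₀' hM] at key

theorem strongly_cocoercive_of_quadratic_bounds {f : E → ℝ} {g : E → E} {β L : ℝ}
    (hsc : ∀ x y, f y ≥ f x + ⟪g x, y - x⟫ + β / 2 * ‖y - x‖ ^ 2)
    (hup : ∀ x y, f y ≤ f x + ⟪g x, y - x⟫ + L / 2 * ‖y - x‖ ^ 2)
    (hlip : ∀ x y, ‖g x - g y‖ ≤ L * ‖x - y‖) (hL : 0 ≤ L) (x y : E) :
    β * L * ‖x - y‖ ^ 2 + ‖g x - g y‖ ^ 2 ≤ (β + L) * ⟪g x - g y, x - y⟫ := by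
  rcases le_or_gt L β with hLβ | hβL
  · have hmono := mul_norm_sq_le_inner_of_quadratic_lower_bound hsc x y
    have hb : ‖g x - g y‖ ^ 2 ≤ L ^ 2 * ‖x - y‖ ^ 2 := by
      rw [← mul_pow]; exact pow_le_pow_left₀ (norm_nonneg _) (hlip x y) 2
    nlinarith [mul_le_mul_of_nonneg_left hmono (by linarith : 0 ≤ β + L),
      mul_nonneg (mul_nonneg (sub_nonneg.2 hLβ) (by linarith : 0 ≤ β + L)) (sq_nonneg ‖x - y‖)]
  · have hco := cocoercive_of_quadratic_bounds (φ := fun u => f u - β / 2 * ‖u‖ ^ 2)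
      (G := fun u => g u - β • u) (sub_pos.2 hβL)
      (fun u v => by
        have := hsc u v
        rw [norm_sq_eq_norm_sq_add_two_mul_inner_add_norm_sq u v, inner_sub_left,
          real_inner_smul_left]
        linarith)
      (fun u v => by
        have := hup u v
        rw [norm_sq_eq_norm_sq_add_two_mul_inner_add_norm_sq u v, inner_sub_left,
          real_inner_smul_left]
        linarith) x y
    rw [sub_sub_sub_comm, ← smul_sub] at hco
    set d := g x - g y
    set a := x - y
    clear_value d a
    rw [norm_sub_sq_real, norm_smul, inner_sub_left, real_inner_smul_left, real_inner_smul_right,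
      real_inner_self_eq_norm_sq, Real.norm_eq_abs, mul_pow, sq_abs] at hco
    linear_combination hco

theorem two_mul_mul_mul_div_le_one {β L h : ℝ} (hβ : 0 < β) (hL : 0 < L) (hh0 : 0 ≤ h)
    (hh : h ≤ 2 / (β + L)) : 2 * h * β * L / (β + L) ≤ 1 := by
  have hβL : 0 < β + L := by positivity
  rw [le_div_iff₀ hβL] at hh
  rw [div_le_one hβL]
  nlinarith [mul_le_mul_of_nonneg_left hh (by positivity : 0 ≤ β * L), sq_nonneg (β - L)]

theorem norm_sub_smul_sub_le_of_cocoercive {g : E → E} {β L h : ℝ} {x z : E}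
    (hβL : 0 < β + L) (hh0 : 0 ≤ h) (hh : h ≤ 2 / (β + L)) (hgz : g z = 0)
    (hco : β * L * ‖x - z‖ ^ 2 + ‖g x - g z‖ ^ 2 ≤ (β + L) * ⟪g x - g z, x - z⟫) :
    ‖x - h • g x - z‖ ≤ √(1 - 2 * h * β * L / (β + L)) * ‖x - z‖ := by
  rw [hgz, sub_zero] at hco
  rw [le_div_iff₀ hβL] at hh
  have hsq : ‖x - h • g x - z‖ ^ 2 ≤ (1 - 2 * h * β * L / (β + L)) * ‖x - z‖ ^ 2 := by
    rw [sub_right_comm, norm_sub_sq_real, norm_smul, real_inner_smul_right, real_inner_comm,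
      Real.norm_of_nonneg hh0, ← sub_nonneg]
    have key : 0 ≤ 2 * h * (β + L) * ⟪g x, x - z⟫ - 2 * h * β * L * ‖x - z‖ ^ 2
        - h ^ 2 * (β + L) * ‖g x‖ ^ 2 := by
      nlinarith [mul_le_mul_of_nonneg_left hco (by positivity : 0 ≤ 2 * h),
        mul_le_mul_of_nonneg_left hh (by positivity : 0 ≤ h * ‖g x‖ ^ 2)]
    have expand : (1 - 2 * h * β * L / (β + L)) * ‖x - z‖ ^ 2
        - (‖x - z‖ ^ 2 - 2 * (h * ⟪g x, x - z⟫) + (h * ‖g x‖) ^ 2)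
        = (2 * h * (β + L) * ⟪g x, x - z⟫ - 2 * h * β * L * ‖x - z‖ ^ 2
          - h ^ 2 * (β + L) * ‖g x‖ ^ 2) / (β + L) := by
      field_simp; ring
    rw [expand]
    positivity
  calc ‖x - h • g x - z‖ = √(‖x - h • g x - z‖ ^ 2) := (Real.sqrt_sq (norm_nonneg _)).symm
    _ ≤ √((1 - 2 * h * β * L / (β + L)) * ‖x - z‖ ^ 2) := Real.sqrt_le_sqrt hsq
    _ = √(1 - 2 * h * β * L / (β + L)) * ‖x - z‖ := by
      rw [Real.sqrt_mul' _ (sq_nonneg _), Real.sqrt_sq (norm_nonneg _)]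

section Gradient

variable [CompleteSpace E]

theorem HasGradientAt.hasDerivAt_comp_add_smul {f : E → ℝ} {g x d : E} {t : ℝ}
    (hf : HasGradientAt f g (x + t • d)) :
    HasDerivAt (fun s : ℝ => f (x + s • d)) ⟪g, d⟫ t := by
  have hline : HasDerivAt (fun s : ℝ => x + s • d) d t := by
    simpa using ((hasDerivAt_id t).smul_const d).const_add x
  exact ((hasGradientAt_iff_hasFDerivAt.mp hf).comp_hasDerivAt t hline).congr_deriv (by simp)

theorem IsLocalMin.gradient_eq_zero {f : E → ℝ} {a : E} (h : IsLocalMin f a) :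
    gradient f a = 0 := by
  simp [gradient, h.fderiv_eq_zero]

theorem le_add_inner_gradient_add_sq_of_lipschitz {f : E → ℝ} {L : ℝ} (hf : Differentiable ℝ f)
    (hlip : ∀ x y, ‖gradient f x - gradient f y‖ ≤ L * ‖x - y‖) (x y : E) :
    f y ≤ f x + ⟪gradient f x, y - x⟫ + L / 2 * ‖y - x‖ ^ 2 := by
  set d := y - x
  let ψ : ℝ → ℝ := fun t => f (x + t • d) - t * ⟪gradient f x, d⟫ - L / 2 * t ^ 2 * ‖d‖ ^ 2
  have hψ : ∀ t, HasDerivAt ψ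
      (⟪gradient f (x + t • d), d⟫ - ⟪gradient f x, d⟫ - L * t * ‖d‖ ^ 2) t := by
    intro t
    have hq : HasDerivAt (fun t : ℝ => L / 2 * t ^ 2 * ‖d‖ ^ 2) (L * t * ‖d‖ ^ 2) t :=
      (((hasDerivAt_pow 2 t).const_mul (L / 2)).mul_const (‖d‖ ^ 2)).congr_deriv (by ring)
    exact (((hf _).hasGradientAt.hasDerivAt_comp_add_smul).sub
      ((hasDerivAt_id t).mul_const _)).sub hq |>.congr_deriv (by simp)
  have hψ' : ∀ t ∈ interior (Set.Icc (0 : ℝ) 1),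
      ⟪gradient f (x + t • d), d⟫ - ⟪gradient f x, d⟫ - L * t * ‖d‖ ^ 2 ≤ 0 := by
    intro t ht
    rw [interior_Icc] at ht
    have hlip' := hlip (x + t • d) x
    rw [add_sub_cancel_left, norm_smul, Real.norm_of_nonneg ht.1.le] at hlip'
    rw [← inner_sub_left, sub_nonpos]
    calc ⟪gradient f (x + t • d) - gradient f x, d⟫
        ≤ ‖gradient f (x + t • d) - gradient f x‖ * ‖d‖ := real_inner_le_norm _ _
      _ ≤ L * (t * ‖d‖) * ‖d‖ := by gcongr
      _ = L * t * ‖d‖ ^ 2 := by ring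
  have hanti := antitoneOn_of_hasDerivWithinAt_nonpos (convex_Icc 0 1)
    (fun t _ => (hψ t).continuousAt.continuousWithinAt) (fun t _ => (hψ t).hasDerivWithinAt) hψ'
  have h01 := hanti (Set.left_mem_Icc.2 zero_le_one) (Set.right_mem_Icc.2 zero_le_one) zero_le_one
  simp only [ψ, d, one_smul, add_sub_cancel, zero_smul, add_zero] at h01
  linarith

end Gradient

/-- Perturbed gradient descent on a strongly convex function inherits the
exponential decay rate up to a neighbourhood (deterministic core of Theorem 3). -/
theorem stmt_6 {n : ℕ} (f : EuclideanSpace ℝ (Fin n) → ℝ) (β L₁ h c : ℝ)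
    (hβ : 0 < β) (hL₁ : 0 < L₁) (hdiff : Differentiable ℝ f)
    (hsc : ∀ x y, f y ≥ f x + ⟪gradient f x, y - x⟫ + β / 2 * ‖y - x‖ ^ 2)
    (hlip : ∀ x y, ‖gradient f x - gradient f y‖ ≤ L₁ * ‖x - y‖)
    (zstar : EuclideanSpace ℝ (Fin n)) (hmin : ∀ x, f zstar ≤ f x)
    (hh0 : 0 < h) (hh : h ≤ 2 / (β + L₁))
    (hc : c = 2 * h * β * L₁ / (β + L₁))
    (q z : ℕ → EuclideanSpace ℝ (Fin n))
    (hz : ∀ k, z (k + 1) = z k - h • gradient f (z k) + q k) :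
    ∀ k : ℕ, ∀ _hk : 1 ≤ k,
      ‖z k - zstar‖ ≤ (1 - c) ^ ((k : ℝ) / 2) * ‖z 0 - zstar‖ +
        1 / (1 - Real.sqrt (1 - c)) *
          (Finset.range k).sup' (Finset.nonempty_range_iff.mpr (by omega))
            (fun j => ‖q j‖) := by
  intro k hk
  have hgz : gradient f zstar = 0 := IsLocalMin.gradient_eq_zero (.of_forall hmin)
  have hcoco := strongly_cocoercive_of_quadratic_bounds hsc
    (le_add_inner_gradient_add_sq_of_lipschitz hdiff hlip) hlip hL₁.le
  have hstep : ∀ j, ‖z (j + 1) - zstar‖ ≤ √(1 - c) * ‖z j - zstar‖ + ‖q j‖ := fun j => by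
    rw [hz, add_sub_right_comm, hc]
    exact (norm_add_le _ _).trans <| add_le_add_left (norm_sub_smul_sub_le_of_cocoercive
      (by positivity) hh0.le hh hgz (hcoco (z j) zstar)) _
  have hc1 : 0 ≤ 1 - c := sub_nonneg.2 (hc ▸ two_mul_mul_mul_div_le_one hβ hL₁ hh0.le hh)
  have hr1 : √(1 - c) < 1 := by
    rw [Real.sqrt_lt' one_pos, hc]
    have : 0 < 2 * h * β * L₁ / (β + L₁) := by positivity
    linarith
  rw [Real.rpow_div_two_eq_sqrt _ hc1, Real.rpow_natCast]
  exact le_pow_mul_add_div_of_le_mul_add (a := fun j => ‖z j - zstar‖) (Real.sqrt_nonneg _) hr1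
    ((norm_nonneg _).trans (le_sup' (fun j => ‖q j‖) (mem_range.2 hk))) hstep
    fun j hj => le_sup' (fun j => ‖q j‖) (mem_range.2 hj)
end

section
/- Let α : [0,∞) → [0,∞) be a class-K∞ function. Then there exists a class-K∞ function α̂ such that α̂(r) ≤ α(r) for all r ≥ 0 and the function r ↦ r − α̂(r) is of class K. -/
/-!
Replace `α` by its inf-convolution with the identity from the left,
`g r = inf_{0 ≤ s ≤ r} (α s + (r - s))`. Comparing the minimizers at two radii shows that `g` is
strictly increasing with `g r₂ ≤ g r₁ + (r₂ - r₁)` for `r₁ ≤ r₂`, i.e. `r ↦ r - g r` is monotone,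
and splitting at `s = r / 2` shows that `g` still tends to infinity. Since `g ≤ α`, the function
`α̂ = g / 2` works: `r - α̂ r = (r - g r) / 2 + r / 2` is strictly increasing.
-/

open Set Filter

noncomputable def lowerEnvelope (α : ℝ → ℝ) (r : ℝ) : ℝ :=
  sInf ((fun s => α s + (r - s)) '' Icc 0 r)

namespace lowerEnvelope

variable {α : ℝ → ℝ}

theorem zero : lowerEnvelope α 0 = α 0 := by
  simp [lowerEnvelope]

section Continuous

variable (hα : ContinuousOn α (Ici 0))
include hα

theorem isCompact_image (r : ℝ) : IsCompact ((fun s => α s + (r - s)) '' Icc 0 r) :=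
  isCompact_Icc.image_of_continuousOn
    ((hα.mono Icc_subset_Ici_self).add (continuousOn_const.sub continuousOn_id))

theorem le_add_sub {r s : ℝ} (hs : s ∈ Icc 0 r) : lowerEnvelope α r ≤ α s + (r - s) :=
  csInf_le (isCompact_image hα r).bddBelow (mem_image_of_mem _ hs)

theorem le_self {r : ℝ} (hr : 0 ≤ r) : lowerEnvelope α r ≤ α r := by
  simpa using le_add_sub hα (right_mem_Icc.2 hr)

theorem exists_eq {r : ℝ} (hr : 0 ≤ r) : ∃ s ∈ Icc 0 r, lowerEnvelope α r = α s + (r - s) := by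
  obtain ⟨s, hs, he⟩ :=
    (isCompact_image hα r).sInf_mem ⟨_, mem_image_of_mem _ (left_mem_Icc.2 hr)⟩
  exact ⟨s, hs, he.symm⟩

theorem le_add_sub_of_le {r₁ r₂ : ℝ} (h₁ : 0 ≤ r₁) (h₁₂ : r₁ ≤ r₂) :
    lowerEnvelope α r₂ ≤ lowerEnvelope α r₁ + (r₂ - r₁) := by
  obtain ⟨s, hs, he⟩ := exists_eq hα h₁
  linarith [le_add_sub hα ⟨hs.1, hs.2.trans h₁₂⟩]

theorem monotoneOn_id_sub : MonotoneOn (fun r => r - lowerEnvelope α r) (Ici 0) :=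
  fun r₁ h₁ _ _ h₁₂ => by linarith [le_add_sub_of_le hα h₁ h₁₂]

theorem strictMonoOn (hmono : StrictMonoOn α (Ici 0)) :
    StrictMonoOn (lowerEnvelope α) (Ici 0) := by
  intro r₁ h₁ r₂ h₂ h₁₂
  obtain ⟨s, hs, he⟩ := exists_eq hα h₂
  rcases le_or_gt s r₁ with hs₁ | hs₁
  · linarith [le_add_sub hα ⟨hs.1, hs₁⟩]
  · linarith [le_self hα h₁, hmono h₁ hs.1 hs₁, hs.2]

theorem lipschitzOnWith (hmono : StrictMonoOn α (Ici 0)) :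
    LipschitzOnWith 1 (lowerEnvelope α) (Ici 0) := by
  refine LipschitzOnWith.of_le_add fun x hx y hy => ?_
  rcases le_total x y with hxy | hxy
  · linarith [(strictMonoOn hα hmono).monotoneOn hx hy hxy, dist_nonneg (x := x) (y := y)]
  · linarith [le_add_sub_of_le hα hy hxy, Real.dist_eq x y ▸ le_abs_self (x - y)]

theorem min_le (hmono : MonotoneOn α (Ici 0)) {r : ℝ} (hr : 0 ≤ r) :
    min (α (r / 2)) (α 0 + r / 2) ≤ lowerEnvelope α r := by
  obtain ⟨s, hs, he⟩ := exists_eq hα hr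
  rw [he]
  rcases le_total s (r / 2) with hs₂ | hs₂
  · exact (min_le_right _ _).trans (by linarith [hmono self_mem_Ici hs.1 hs.1])
  · have : α (r / 2) ≤ α s := hmono (mem_Ici.2 (by linarith)) hs.1 hs₂
    exact (min_le_left _ _).trans (by linarith [hs.2])

theorem tendsto_atTop (hmono : MonotoneOn α (Ici 0)) (htop : Tendsto α atTop atTop) :
    Tendsto (lowerEnvelope α) atTop atTop := by
  have hhalf : Tendsto (fun r : ℝ => r / 2) atTop atTop := tendsto_id.atTop_div_const two_pos
  refine Filter.tendsto_atTop.2 fun b => ?_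
  filter_upwards [Filter.tendsto_atTop.1 (htop.comp hhalf) b,
    Filter.tendsto_atTop.1 (tendsto_atTop_add_const_left _ (α 0) hhalf) b,
    eventually_ge_atTop 0] with r h₁ h₂ hr
  exact (le_min h₁ h₂).trans (min_le hα hmono hr)

end Continuous

theorem classKInf (hα : ClassKInf α) : ClassKInf (lowerEnvelope α) := by
  obtain ⟨⟨hcont, hmono, h0⟩, htop⟩ := hα
  exact ⟨⟨(lipschitzOnWith hcont hmono).continuousOn, strictMonoOn hcont hmono, zero.trans h0⟩,
    tendsto_atTop hcont hmono.monotoneOn htop⟩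

end lowerEnvelope

theorem ClassK.nonneg {γ : ℝ → ℝ} (hγ : ClassK γ) {r : ℝ} (hr : 0 ≤ r) : 0 ≤ γ r :=
  hγ.2.2 ▸ hγ.2.1.monotoneOn self_mem_Ici hr hr

theorem ClassKInf.div_const {γ : ℝ → ℝ} (hγ : ClassKInf γ) {c : ℝ} (hc : 0 < c) :
    ClassKInf fun r => γ r / c := by
  obtain ⟨⟨hcont, hmono, h0⟩, htop⟩ := hγ
  exact ⟨⟨hcont.div_const c, fun x hx y hy hxy => div_lt_div_of_pos_right (hmono hx hy hxy) hc,
    by simp [h0]⟩, htop.atTop_div_const hc⟩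

theorem classK_id_sub_half {γ : ℝ → ℝ} (hγ : ClassK γ)
    (hsub : MonotoneOn (fun r => r - γ r) (Ici 0)) : ClassK fun r => r - γ r / 2 := by
  refine ⟨continuousOn_id.sub (hγ.1.div_const 2), fun x hx y hy hxy => ?_, by simp [hγ.2.2]⟩
  linarith [hsub hx hy hxy.le]

/-- For any class-K∞ function there is a smaller class-K∞ function `α̂` with
`Id − α̂` of class K (Lemma B.1 of Jiang–Wang). -/
theorem stmt_18 (α : ℝ → ℝ) (hα : ClassKInf α) :
    ∃ αhat : ℝ → ℝ, ClassKInf αhat ∧ (∀ r ≥ (0 : ℝ), αhat r ≤ α r) ∧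
      ClassK (fun r => r - αhat r) := by
  have hg := lowerEnvelope.classKInf hα
  refine ⟨fun r => lowerEnvelope α r / 2, hg.div_const two_pos, fun r hr => ?_,
    classK_id_sub_half hg.1 (lowerEnvelope.monotoneOn_id_sub hα.1.1)⟩
  linarith [lowerEnvelope.le_self hα.1.1 hr, hg.1.nonneg hr]
end
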